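/- arXiv:2509.18673 — 2 statements merged into one kernel-verified Lean document; each statement's English description precedes it below -/
import Mathlib

section
/- Let λ > 0 satisfy: for all agents i and bundles S,T ⊆ [m], if v_i(S) − v_i(T) > 0 then v_i(S) − v_i(T) ≥ λ. Let 0 < ε < λ/(2m), and let v̄ be a perturbed valuation profile on items {1,…,m+1} with v̄_i(m+1) = λ/2 for all i and, for j ≤ m, v_i(j) − ε ≤ v̄_i(j) ≤ v_i(j). Suppose an allocation A = (A_1,…,A_n) of {1,…,m+1} satisfies v̄_i(A_i Δ S_i) ≥ v̄_i(A_j) for some fixed agent i, a set S_i of at most one item, and all agents j. Then v_i((A_i ∖ {m+1}) Δ (S_i ∖ {m+1})) ≥ v_i(A_j ∖ {m+1}) for all agents j. -/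
/-!
Removing the item `m+1` changes the perturbed value of a bundle by at most `λ/2`, and undoing
the perturbation changes it by at most `mε < λ/2`. So a strict violation of envy-freeness in
the original instance, which by the gap hypothesis is at least `λ`, would survive in the
perturbed instance.
-/

open Finset

/-- Value of a bundle under an additive valuation. -/
def bval {α : Type*} (u : α → ℝ) (S : Finset α) : ℝ := ∑ j ∈ S, u j

/-- An allocation: every item belongs to exactly one agent's bundle. -/
def IsAlloc {n : ℕ} {I : Type*} (A : Fin n → Finset I) : Prop :=
  ∀ j : I, ∃! i : Fin n, j ∈ A i

/-- Remove the added item `m+1` from a bundle of the enlarged instance,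
viewing the result as a bundle of the original `m` items. -/
noncomputable def drop {m : ℕ} (S : Finset (Fin (m+1))) : Finset (Fin m) :=
  S.preimage Fin.castSucc (Fin.castSucc_injective m).injOn

section bval

variable {α : Type*} {u w : α → ℝ}

lemma bval_le_bval (h : ∀ j, u j ≤ w j) (S : Finset α) : bval u S ≤ bval w S :=
  sum_le_sum fun j _ ↦ h j

lemma bval_sub_card_mul_le {ε : ℝ} (h : ∀ j, u j - ε ≤ w j) (S : Finset α) :
    bval u S - S.card * ε ≤ bval w S := by
  have hsub : bval (fun j ↦ u j - ε) S = bval u S - S.card * ε := by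
    rw [bval, sum_sub_distrib, sum_const, nsmul_eq_mul, bval]
  exact hsub ▸ bval_le_bval h S

end bval

section drop

variable {m : ℕ}

lemma drop_symmDiff (A B : Finset (Fin (m+1))) :
    drop (symmDiff A B) = symmDiff (drop A) (drop B) := by
  ext j
  simp [drop, mem_symmDiff]

lemma bval_eq_bval_drop_add (u : Fin (m+1) → ℝ) (T : Finset (Fin (m+1))) :
    bval u T = bval (u ∘ Fin.castSucc) (drop T) +
      if Fin.last m ∈ T then u (Fin.last m) else 0 := by
  classical
  rw [bval, bval, drop, Function.comp_def, sum_preimage',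
    ← sum_filter_add_sum_filter_not T (· ∈ Set.range Fin.castSucc)]
  congr 1
  simp only [Set.mem_range, Fin.exists_castSucc_eq, not_not, sum_filter, sum_ite_eq']

theorem bval_drop_le_of_bval_perturbed_le {v : Fin m → ℝ} {vb : Fin (m+1) → ℝ} {lam ε : ℝ}
    (hgap : ∀ S T : Finset (Fin m), 0 < bval v S - bval v T → lam ≤ bval v S - bval v T)
    (hε0 : 0 ≤ ε) (hε : m * ε < lam / 2) (hlast : vb (Fin.last m) = lam / 2)
    (hpert : ∀ j, v j - ε ≤ vb j.castSucc ∧ vb j.castSucc ≤ v j)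
    {X Y : Finset (Fin (m+1))} (hYX : bval vb Y ≤ bval vb X) :
    bval v (drop Y) ≤ bval v (drop X) := by
  by_contra! hlt
  have hjump := hgap _ _ (sub_pos.2 hlt)
  have hhalf : 0 ≤ lam / 2 := by linarith [mul_nonneg m.cast_nonneg hε0]
  have hcard : ((drop Y).card : ℝ) * ε ≤ m * ε := by
    gcongr
    exact_mod_cast card_le_univ (drop Y) |>.trans_eq (Fintype.card_fin m)
  have hY : bval v (drop Y) - m * ε ≤ bval vb Y := by
    have := bval_sub_card_mul_le (w := vb ∘ Fin.castSucc) (fun j ↦ (hpert j).1) (drop Y)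
    rw [bval_eq_bval_drop_add vb Y]
    split_ifs <;> linarith
  have hX : bval vb X ≤ bval v (drop X) + lam / 2 := by
    have := bval_le_bval (u := vb ∘ Fin.castSucc) (fun j ↦ (hpert j).2) (drop X)
    rw [bval_eq_bval_drop_add vb X]
    split_ifs <;> linarith
  linarith

end drop

lemma mul_lt_half_of_lt_div_two_mul {m : ℕ} {lam ε : ℝ} (hε0 : 0 < ε) (hε : ε < lam / (2 * m)) :
    m * ε < lam / 2 := by
  rcases Nat.eq_zero_or_pos m with rfl | hm
  · simp at hε
    linarith
  · have hm' : (0 : ℝ) < 2 * m := by positivity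
    rw [lt_div_iff₀ hm'] at hε
    linarith

theorem stmt5_general (n m : ℕ) (v : Fin n → Fin m → ℝ) (vb : Fin n → Fin (m+1) → ℝ)
    (lam ε : ℝ)
    (hgap : ∀ (i : Fin n) (S T : Finset (Fin m)),
      0 < bval (v i) S - bval (v i) T → lam ≤ bval (v i) S - bval (v i) T)
    (hε0 : 0 < ε) (hε : ε < lam / (2 * m))
    (hlast : ∀ i, vb i (Fin.last m) = lam / 2)
    (hpert : ∀ (i : Fin n) (j : Fin m),
      v i j - ε ≤ vb i j.castSucc ∧ vb i j.castSucc ≤ v i j)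
    (A : Fin n → Finset (Fin (m+1)))
    (i : Fin n) (S : Finset (Fin (m+1)))
    (hIEF : ∀ j : Fin n, bval (vb i) (A j) ≤ bval (vb i) (symmDiff (A i) S)) :
    ∀ j : Fin n, bval (v i) (drop (A j)) ≤ bval (v i) (symmDiff (drop (A i)) (drop S)) := by
  intro j
  rw [← drop_symmDiff]
  exact bval_drop_le_of_bval_perturbed_le (hgap i) hε0.le (mul_lt_half_of_lt_div_two_mul hε0 hε)
    (hlast i) (hpert i) (hIEF j)

/-- if agent `i` is IEF1-satisfied (via the set `S` of at most one
item) in the perturbed instance, then after removing the item `m+1` agent `i`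
is IEF1-satisfied (via `S ∖ {m+1}`) in the original instance. -/
theorem stmt5 (n m : ℕ) (v : Fin n → Fin m → ℝ) (vb : Fin n → Fin (m+1) → ℝ)
    (lam ε : ℝ) (hlam : 0 < lam)
    (hgap : ∀ (i : Fin n) (S T : Finset (Fin m)),
      0 < bval (v i) S - bval (v i) T → lam ≤ bval (v i) S - bval (v i) T)
    (hε0 : 0 < ε) (hε : ε < lam / (2 * m))
    (hlast : ∀ i, vb i (Fin.last m) = lam / 2)
    (hpert : ∀ (i : Fin n) (j : Fin m),
      v i j - ε ≤ vb i j.castSucc ∧ vb i j.castSucc ≤ v i j)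
    (A : Fin n → Finset (Fin (m+1))) (hA : IsAlloc A)
    (i : Fin n) (S : Finset (Fin (m+1))) (hS : S.card ≤ 1)
    (hIEF : ∀ j : Fin n, bval (vb i) (A j) ≤ bval (vb i) (symmDiff (A i) S)) :
    ∀ j : Fin n, bval (v i) (drop (A j)) ≤ bval (v i) (symmDiff (drop (A i)) (drop S)) :=
  stmt5_general n m v vb lam ε hgap hε0 hε hlast hpert A i S hIEF
end

section
/- Let ω > 0 satisfy: for all pairs of allocations A, B of the items [m], if Σ_{i=1}^n v_i(A_i) − Σ_{i=1}^n v_i(B_i) > 0 then this difference is at least ω. Let 0 < η < 1 and 0 < ε < ηω/(2m). Define the intermediate instance I′ on items {1,…,m+1} by v′_i(j) = v_i(j) for j ≤ m and v′_i(m+1) = λ/2 for all i (some fixed λ > 0). Let v̄ satisfy v′_i(j) − ε ≤ v̄_i(j) ≤ v′_i(j) for all i and all j ∈ {1,…,m+1} with v̄_i(m+1) = λ/2. Fix w ∈ Δ_{n−1}. If an allocation A of {1,…,m+1} maximizes Σ_{i=1}^n (w_i + η) v̄_i(A_i) over all allocations, then A is Pareto optimal for the instance I′ with valuations v′. -/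
open Finset

/-- Pareto optimality with respect to valuations `u`. -/
def ParetoOptimal {n : ℕ} {I : Type*} (u : Fin n → I → ℝ) (A : Fin n → Finset I) : Prop :=
  ¬ ∃ B : Fin n → Finset I, IsAlloc B ∧
      (∀ i, bval (u i) (A i) ≤ bval (u i) (B i)) ∧
      ∃ a, bval (u a) (A a) < bval (u a) (B a)

lemma bval_univ {α : Type*} [Fintype α] [DecidableEq α] (u : α → ℝ) (S : Finset α) :
    bval u S = ∑ j, if j ∈ S then u j else 0 := by
  simp [bval, Finset.sum_ite_mem]

def res {m : ℕ} (S : Finset (Fin (m+1))) : Finset (Fin m) :=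
  univ.filter (fun j => j.castSucc ∈ S)

lemma bval_split {m : ℕ} (f : Fin (m+1) → ℝ) (S : Finset (Fin (m+1))) :
    bval f S = (∑ j : Fin m, if j ∈ res S then f j.castSucc else 0)
      + (if Fin.last m ∈ S then f (Fin.last m) else 0) := by
  rw [bval_univ, Fin.sum_univ_castSucc]
  simp [res]

lemma bval_snoc' {m : ℕ} (u : Fin m → ℝ) (c : ℝ) (S : Finset (Fin (m+1))) :
    bval (Fin.snoc u c) S = bval u (res S) + (if Fin.last m ∈ S then c else 0) := by
  rw [bval_split, bval_univ]
  simp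

lemma alloc_res {n m : ℕ} {A : Fin n → Finset (Fin (m+1))} (hA : IsAlloc A) :
    IsAlloc (fun i => res (A i)) := by
  intro j
  simpa [res] using hA j.castSucc

lemma sum_ite_alloc {n : ℕ} {I : Type*} [DecidableEq I] {A : Fin n → Finset I} (hA : IsAlloc A)
    (j : I) (c : ℝ) : ∑ i, (if j ∈ A i then c else 0) = c := by
  obtain ⟨i0, hi0, hu⟩ := hA j
  rw [Finset.sum_eq_single i0]
  · exact if_pos hi0
  · intro i _ hne
    exact if_neg fun h => hne (hu i h)
  · exact fun h => absurd (mem_univ i0) h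

lemma sum_card_alloc {n m : ℕ} {C : Fin n → Finset (Fin m)} (hC : IsAlloc C) :
    ∑ i, ((C i).card : ℝ) = m := by
  have h1 : ∀ i, ((C i).card : ℝ) = ∑ j : Fin m, (if j ∈ C i then (1:ℝ) else 0) := by
    intro i
    rw [Finset.sum_ite_mem, univ_inter, Finset.sum_const, nsmul_eq_mul, mul_one]
  calc ∑ i, ((C i).card : ℝ) = ∑ i, ∑ j : Fin m, (if j ∈ C i then (1:ℝ) else 0) := by
        simp only [h1]
    _ = ∑ j : Fin m, ∑ i, (if j ∈ C i then (1:ℝ) else 0) := Finset.sum_comm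
    _ = ∑ _j : Fin m, (1:ℝ) := by
        apply Finset.sum_congr rfl; intro j _; exact sum_ite_alloc hC j 1
    _ = m := by simp

/-- any allocation maximizing the `(w+η)`-weighted welfare of the
perturbed instance is Pareto optimal for the intermediate instance `I'`, whose
valuations are `v` on the original items together with value `λ/2` for the
added item `m+1` (encoded via `Fin.snoc`). -/
theorem stmt7 (n m : ℕ) (v : Fin n → Fin m → ℝ) (vb : Fin n → Fin (m+1) → ℝ)
    (ω lam η ε : ℝ) (hω : 0 < ω)
    (hgapSW : ∀ A B : Fin n → Finset (Fin m), IsAlloc A → IsAlloc B →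
      0 < (∑ i, bval (v i) (A i)) - (∑ i, bval (v i) (B i)) →
      ω ≤ (∑ i, bval (v i) (A i)) - (∑ i, bval (v i) (B i)))
    (hη0 : 0 < η) (hη1 : η < 1) (hε0 : 0 < ε) (hε : ε < η * ω / (2 * m))
    (hlam : 0 < lam)
    (hpert : ∀ (i : Fin n) (j : Fin (m+1)),
      (Fin.snoc (v i) (lam / 2) : Fin (m+1) → ℝ) j - ε ≤ vb i j ∧
        vb i j ≤ (Fin.snoc (v i) (lam / 2) : Fin (m+1) → ℝ) j)
    (hlast : ∀ i, vb i (Fin.last m) = lam / 2)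
    (w : Fin n → ℝ) (hw : w ∈ stdSimplex ℝ (Fin n))
    (A : Fin n → Finset (Fin (m+1))) (hA : IsAlloc A)
    (hopt : ∀ B : Fin n → Finset (Fin (m+1)), IsAlloc B →
      ∑ i, (w i + η) * bval (vb i) (B i) ≤ ∑ i, (w i + η) * bval (vb i) (A i)) :
    ParetoOptimal (fun i => (Fin.snoc (v i) (lam / 2) : Fin (m+1) → ℝ)) A := by
  have hm : 0 < m := by
    rcases Nat.eq_zero_or_pos m with h | h
    · subst h; norm_num at hε; linarith
    · exact h
  have hmR : (0:ℝ) < m := by exact_mod_cast hm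
  rintro ⟨B, hB, hle, a, hlt⟩
  have hle' : ∀ i, bval (Fin.snoc (v i) (lam/2) : Fin (m+1) → ℝ) (A i)
      ≤ bval (Fin.snoc (v i) (lam/2) : Fin (m+1) → ℝ) (B i) := hle
  have hlt' : bval (Fin.snoc (v a) (lam/2) : Fin (m+1) → ℝ) (A a)
      < bval (Fin.snoc (v a) (lam/2) : Fin (m+1) → ℝ) (B a) := hlt
  have hA' := alloc_res hA
  have hB' := alloc_res hB
  -- D : total welfare difference
  have hDpos : 0 < ∑ i, (bval (Fin.snoc (v i) (lam/2) : Fin (m+1) → ℝ) (B i)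
      - bval (Fin.snoc (v i) (lam/2) : Fin (m+1) → ℝ) (A i)) := by
    apply Finset.sum_pos' (fun i _ => by linarith [hle' i])
    exact ⟨a, mem_univ a, by linarith [hlt']⟩
  have hDeq : ∑ i, (bval (Fin.snoc (v i) (lam/2) : Fin (m+1) → ℝ) (B i)
      - bval (Fin.snoc (v i) (lam/2) : Fin (m+1) → ℝ) (A i))
      = (∑ i, bval (v i) (res (B i))) - (∑ i, bval (v i) (res (A i))) := by
    simp only [bval_snoc']
    rw [Finset.sum_sub_distrib, Finset.sum_add_distrib, Finset.sum_add_distrib,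
      sum_ite_alloc hB (Fin.last m) (lam/2), sum_ite_alloc hA (Fin.last m) (lam/2)]
    ring
  have hgap : ω ≤ ∑ i, (bval (Fin.snoc (v i) (lam/2) : Fin (m+1) → ℝ) (B i)
      - bval (Fin.snoc (v i) (lam/2) : Fin (m+1) → ℝ) (A i)) := by
    rw [hDeq] at hDpos ⊢
    exact hgapSW _ _ hB' hA' hDpos
  -- perturbation bounds
  have hub : ∀ i, bval (vb i) (A i)
      ≤ bval (Fin.snoc (v i) (lam/2) : Fin (m+1) → ℝ) (A i) := by
    intro i
    exact Finset.sum_le_sum (fun j _ => (hpert i j).2)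
  have hlb : ∀ i, bval (Fin.snoc (v i) (lam/2) : Fin (m+1) → ℝ) (B i)
      - ε * ((res (B i)).card : ℝ) ≤ bval (vb i) (B i) := by
    intro i
    rw [bval_snoc', bval_split (vb i) (B i), hlast i]
    have hcard : ε * ((res (B i)).card : ℝ)
        = ∑ j : Fin m, if j ∈ res (B i) then ε else 0 := by
      rw [Finset.sum_ite_mem, univ_inter, Finset.sum_const, nsmul_eq_mul]; ring
    have h1 : bval (v i) (res (B i)) - ε * ((res (B i)).card : ℝ)
        ≤ ∑ j : Fin m, if j ∈ res (B i) then vb i j.castSucc else 0 := by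
      rw [bval_univ, hcard, ← Finset.sum_sub_distrib]
      apply Finset.sum_le_sum
      intro j _
      split_ifs with h
      · have := (hpert i j.castSucc).1
        simp only [Fin.snoc_castSucc] at this
        linarith
      · simp
    linarith
  -- weight bounds
  have hw0 : ∀ i, 0 ≤ w i := hw.1
  have hw1 : ∀ i, w i ≤ 1 := by
    intro i
    calc w i ≤ ∑ j, w j := Finset.single_le_sum (fun j _ => hw.1 j) (mem_univ i)
      _ = 1 := hw.2
  have t1 : ∑ i, (w i + η) * bval (vb i) (A i)
      ≤ ∑ i, (w i + η) * bval (Fin.snoc (v i) (lam/2) : Fin (m+1) → ℝ) (A i) := by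
    apply Finset.sum_le_sum
    intro i _
    exact mul_le_mul_of_nonneg_left (hub i) (by linarith [hw0 i])
  have t2 : ∑ i, (w i + η) * (bval (Fin.snoc (v i) (lam/2) : Fin (m+1) → ℝ) (B i)
        - ε * ((res (B i)).card : ℝ))
      ≤ ∑ i, (w i + η) * bval (vb i) (B i) := by
    apply Finset.sum_le_sum
    intro i _
    exact mul_le_mul_of_nonneg_left (hlb i) (by linarith [hw0 i])
  have h1 : ∑ i, (w i + η) * (bval (Fin.snoc (v i) (lam/2) : Fin (m+1) → ℝ) (B i)
        - bval (Fin.snoc (v i) (lam/2) : Fin (m+1) → ℝ) (A i))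
      ≤ ∑ i, (w i + η) * (ε * ((res (B i)).card : ℝ)) := by
    have hop := hopt B hB
    have e1 : ∑ i, ((w i + η) * (bval (Fin.snoc (v i) (lam/2) : Fin (m+1) → ℝ) (B i)
          - bval (Fin.snoc (v i) (lam/2) : Fin (m+1) → ℝ) (A i))
          - (w i + η) * (ε * ((res (B i)).card : ℝ)))
        = ∑ i, ((w i + η) * (bval (Fin.snoc (v i) (lam/2) : Fin (m+1) → ℝ) (B i)
          - ε * ((res (B i)).card : ℝ))
          - (w i + η) * bval (Fin.snoc (v i) (lam/2) : Fin (m+1) → ℝ) (A i)) := by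
      apply Finset.sum_congr rfl; intro i _; ring
    rw [← sub_nonpos, ← Finset.sum_sub_distrib, e1, Finset.sum_sub_distrib]
    linarith
  have h2 : η * ω ≤ ∑ i, (w i + η) * (bval (Fin.snoc (v i) (lam/2) : Fin (m+1) → ℝ) (B i)
      - bval (Fin.snoc (v i) (lam/2) : Fin (m+1) → ℝ) (A i)) := by
    have step : η * ∑ i, (bval (Fin.snoc (v i) (lam/2) : Fin (m+1) → ℝ) (B i)
        - bval (Fin.snoc (v i) (lam/2) : Fin (m+1) → ℝ) (A i))
        ≤ ∑ i, (w i + η) * (bval (Fin.snoc (v i) (lam/2) : Fin (m+1) → ℝ) (B i)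
        - bval (Fin.snoc (v i) (lam/2) : Fin (m+1) → ℝ) (A i)) := by
      rw [Finset.mul_sum]
      apply Finset.sum_le_sum
      intro i _
      have hΔ : 0 ≤ bval (Fin.snoc (v i) (lam/2) : Fin (m+1) → ℝ) (B i)
          - bval (Fin.snoc (v i) (lam/2) : Fin (m+1) → ℝ) (A i) := by linarith [hle' i]
      nlinarith [hw0 i]
    have := mul_le_mul_of_nonneg_left hgap hη0.le
    linarith
  have h3 : ∑ i, (w i + η) * (ε * ((res (B i)).card : ℝ)) ≤ ε * (1 + η) * m := by
    have hcs := sum_card_alloc hB'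
    calc ∑ i, (w i + η) * (ε * ((res (B i)).card : ℝ))
        ≤ ∑ i, (1 + η) * (ε * ((res (B i)).card : ℝ)) := by
          apply Finset.sum_le_sum
          intro i _
          have hc : (0:ℝ) ≤ ε * ((res (B i)).card : ℝ) := by positivity
          nlinarith [hw1 i]
      _ = ε * (1 + η) * m := by
          rw [← Finset.mul_sum, ← Finset.mul_sum, hcs]; ring
  have hεω : ε * (2 * m) < η * ω := by
    rw [lt_div_iff₀ (by positivity)] at hε
    exact hε
  have : ε * (1 + η) * m < ε * (2 * m) := by nlinarith [mul_pos hε0 hmR]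
  linarith
end
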